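/- arXiv:1410.5300 — 2 statements merged into one kernel-verified Lean document; each statement's English description precedes it below -/
import Mathlib

section
/- For all integers n ≥ 0 and k ≥ 1, every sequence of real numbers ᾱ = (α₀, α₁, …, α_{n−1}) and all nonzero real numbers ℓ₁, …, ℓ_k, the multiparameter poly-Cauchy numbers of the second kind satisfy Ĉ_{n,L}^{(k)}(ᾱ) = Σ_{m=0}^{n} (−1)^n |s_ᾱ(n,m)| (ℓ₁ℓ₂⋯ℓ_k)^{m+1} / (m+1)^k. -/
/-! Up to the sign (-1)^n the integrand is ∑ₘ |s_ᾱ(n,m)| tᵐ, and the monomial (x₁⋯x_k)ᵐ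
integrates over the box to ∏ᵢ ℓᵢ^{m+1}/(m+1), one factor per variable. -/

open Finset

/-- Iterated integral ∫₀^{ℓ₁}⋯∫₀^{ℓ_k} f(x₁x₂⋯x_k) dx₁⋯dx_k over the list of bounds. -/
noncomputable def iterInt : List ℝ → (ℝ → ℝ) → ℝ
  | [], f => f 1
  | l :: ls, f => ∫ x in (0:ℝ)..l, iterInt ls (fun y => f (x * y))

lemma integral_sum_mul_pow (l : ℝ) (N : ℕ) (a : ℕ → ℝ) :
    ∫ x in (0:ℝ)..l, ∑ m ∈ range N, a m * x ^ m =
      ∑ m ∈ range N, a m * l ^ (m + 1) / ((m : ℝ) + 1) := by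
  rw [intervalIntegral.integral_finsetSum fun m _ =>
    (by fun_prop : Continuous _).intervalIntegrable _ _]
  refine sum_congr rfl fun m _ => ?_
  rw [intervalIntegral.integral_const_mul, integral_pow, zero_pow m.succ_ne_zero, sub_zero,
    mul_div_assoc]

lemma iterInt_sum_mul_pow (ls : List ℝ) (N : ℕ) (c : ℕ → ℝ) :
    iterInt ls (fun t => ∑ m ∈ range N, c m * t ^ m) =
      ∑ m ∈ range N, c m * ls.prod ^ (m + 1) / ((m : ℝ) + 1) ^ ls.length := by
  induction ls generalizing c with
  | nil => simp [iterInt]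
  | cons l ls ih =>
    have inner (x : ℝ) :
        iterInt ls (fun y => ∑ m ∈ range N, c m * (x * y) ^ m) =
          ∑ m ∈ range N, c m * ls.prod ^ (m + 1) / ((m : ℝ) + 1) ^ ls.length * x ^ m := by
      simp_rw [mul_pow, ← mul_assoc]
      rw [ih]
      exact sum_congr rfl fun m _ => by ring
    simp only [iterInt, inner, integral_sum_mul_pow, List.prod_cons, List.length_cons]
    refine sum_congr rfl fun m _ => ?_
    rw [mul_pow, pow_succ _ ls.length]
    field_simp

lemma prod_neg_sub {ι R : Type*} [CommRing R] (s : Finset ι) (f : ι → R) (t : R) :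
    ∏ i ∈ s, (-t - f i) = (-1) ^ #s * ∏ i ∈ s, (t + f i) := by
  simp_rw [← neg_add', prod_neg]

theorem stmt6_general (n k : ℕ) (α : ℕ → ℝ) (L : Fin k → ℝ)
    (sabs : ℕ → ℝ)
    (hsabs : ∀ x : ℝ, ∏ i ∈ range n, (x + α i) = ∑ m ∈ range (n + 1), sabs m * x ^ m) :
    iterInt (List.ofFn L) (fun t => ∏ i ∈ range n, (-t - α i)) =
      ∑ m ∈ range (n + 1),
        (-1 : ℝ) ^ n * sabs m * (∏ i, L i) ^ (m + 1) / ((m : ℝ) + 1) ^ k := by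
  have expand (t : ℝ) :
      ∏ i ∈ range n, (-t - α i) = ∑ m ∈ range (n + 1), (-1) ^ n * sabs m * t ^ m := by
    simp_rw [prod_neg_sub, card_range, hsabs, mul_sum, mul_assoc]
  simp_rw [expand, iterInt_sum_mul_pow, List.length_ofFn, List.prod_ofFn]

theorem stmt6 (n k : ℕ) (hk : 1 ≤ k) (α : ℕ → ℝ) (L : Fin k → ℝ)
    (hL : ∀ i, L i ≠ 0) (sabs : ℕ → ℝ)
    (hsabs : ∀ x : ℝ, ∏ i ∈ range n, (x + α i) = ∑ m ∈ range (n + 1), sabs m * x ^ m) :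
    iterInt (List.ofFn L) (fun t => ∏ i ∈ range n, (-t - α i)) =
      ∑ m ∈ range (n + 1),
        (-1 : ℝ) ^ n * sabs m * (∏ i, L i) ^ (m + 1) / ((m : ℝ) + 1) ^ k :=
  stmt6_general n k α L sabs hsabs
end

section
/- For all integers n ≥ 0 and k ≥ 1, every sequence of real numbers ᾱ = (α₀, α₁, …, α_{n−1}) and all nonzero real numbers ℓ₁, …, ℓ_k, the multiparameter poly-Cauchy numbers of the second kind satisfy Ĉ_{n,L}^{(k)}(ᾱ) = Σ_{r=0}^{n} Σ_{m=r}^{n} S(n,m;ᾱ) L(m,r) C_{r,L}^{(k)}, where C_{r,L}^{(k)} = ∫₀^{ℓ₁}⋯∫₀^{ℓ_k} (x₁x₂⋯x_k)_r dx₁⋯dx_k. -/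
/-!
Substituting `-t` into the expansion defining `S` and then expanding each `(-t)_m` by the Lah
numbers writes the integrand as a linear combination of falling factorials `(t)_r`, with
`t = x₁⋯x_k`. The iterated integral of a polynomial integrand is computed monomial by monomial,
so it is linear on polynomial integrands and may be taken term by term.
-/

open Finset

/-- Falling factorial (x)_m = x(x-1)⋯(x-m+1) of a real number. -/
noncomputable def ffall (x : ℝ) (m : ℕ) : ℝ := ∏ i ∈ Finset.range m, (x - (i : ℝ))

open Polynomial

lemma ffall_eq_eval_descPochhammer (x : ℝ) (m : ℕ) :
    ffall x m = (descPochhammer ℝ m).eval x :=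
  (descPochhammer_eval_eq_prod_range m x).symm

lemma iterInt_const_mul (l : List ℝ) (c : ℝ) (f : ℝ → ℝ) :
    iterInt l (fun t => c * f t) = c * iterInt l f := by
  induction l generalizing f with
  | nil => rfl
  | cons a ls ih => simp only [iterInt, ih, intervalIntegral.integral_const_mul]

lemma iterInt_mul_pow (l : List ℝ) (x : ℝ) (j : ℕ) :
    iterInt l (fun y => (x * y) ^ j) = x ^ j * iterInt l (· ^ j) := by
  simp_rw [mul_pow]
  exact iterInt_const_mul l _ _

lemma iterInt_sum_mul_pow_s8 (l : List ℝ) (s : Finset ℕ) (c : ℕ → ℝ) :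
    iterInt l (fun t => ∑ j ∈ s, c j * t ^ j) = ∑ j ∈ s, c j * iterInt l (· ^ j) := by
  induction l generalizing c with
  | nil => simp [iterInt]
  | cons a ls ih =>
    have inner (x : ℝ) : iterInt ls (fun y => ∑ j ∈ s, c j * (x * y) ^ j)
        = ∑ j ∈ s, c j * iterInt ls (· ^ j) * x ^ j := by
      simp_rw [mul_pow, ← mul_assoc]
      rw [ih]
      exact sum_congr rfl fun j _ => by ring
    simp only [iterInt, inner, iterInt_mul_pow]
    rw [intervalIntegral.integral_finsetSum fun j _ =>
      (by fun_prop : Continuous _).intervalIntegrable _ _]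
    refine sum_congr rfl fun j _ => ?_
    rw [intervalIntegral.integral_const_mul, intervalIntegral.integral_mul_const]
    ring

noncomputable def iterIntPoly (l : List ℝ) : ℝ[X] →ₗ[ℝ] ℝ :=
  lsum fun j => LinearMap.id.smulRight (iterInt l (· ^ j))

lemma iterInt_eval (l : List ℝ) (p : ℝ[X]) :
    iterInt l (fun t => p.eval t) = iterIntPoly l p := by
  simp only [eval_eq_sum, Polynomial.sum_def, iterInt_sum_mul_pow_s8, iterIntPoly, lsum_apply,
    LinearMap.smulRight_apply, LinearMap.id_apply, smul_eq_mul]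

lemma iterInt_sum_mul_eval {ι : Type*} (l : List ℝ) (s : Finset ι) (c : ι → ℝ) (p : ι → ℝ[X]) :
    iterInt l (fun t => ∑ i ∈ s, c i * (p i).eval t) =
      ∑ i ∈ s, c i * iterInt l (fun t => (p i).eval t) := by
  have hsum (t : ℝ) : ∑ i ∈ s, c i * (p i).eval t = (∑ i ∈ s, c i • p i).eval t := by
    simp [eval_finsetSum]
  simp only [hsum, iterInt_eval, map_sum, map_smul, smul_eq_mul]

theorem stmt8_general (n k : ℕ) (α : ℕ → ℝ) (L : Fin k → ℝ)
    (S : ℕ → ℝ) (Lah : ℕ → ℕ → ℝ)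
    (hS : ∀ x : ℝ, ∏ i ∈ range n, (x - α i) = ∑ m ∈ range (n + 1), S m * ffall x m)
    (hLah : ∀ m ≤ n, ∀ x : ℝ, ffall (-x) m = ∑ r ∈ range (m + 1), Lah m r * ffall x r) :
    iterInt (List.ofFn L) (fun t => ∏ i ∈ range n, (-t - α i)) =
      ∑ r ∈ range (n + 1), ∑ m ∈ Icc r n,
        S m * Lah m r * iterInt (List.ofFn L) (fun t => ffall t r) := by
  have expand (t : ℝ) : ∏ i ∈ range n, (-t - α i) =
      ∑ r ∈ range (n + 1), (∑ m ∈ Icc r n, S m * Lah m r) * ffall t r :=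
    calc ∏ i ∈ range n, (-t - α i)
        = ∑ m ∈ range (n + 1), ∑ r ∈ range (m + 1), S m * Lah m r * ffall t r := by
          rw [hS (-t)]
          refine sum_congr rfl fun m hm => ?_
          rw [hLah m (Nat.lt_succ_iff.mp (mem_range.mp hm)) t, mul_sum]
          simp_rw [mul_assoc]
      _ = ∑ r ∈ range (n + 1), ∑ m ∈ Icc r n, S m * Lah m r * ffall t r :=
          sum_comm' fun m r => by simp only [mem_range, mem_Icc]; omega
      _ = _ := by simp_rw [sum_mul]
  simp_rw [expand, ffall_eq_eval_descPochhammer, iterInt_sum_mul_eval, sum_mul]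

theorem stmt8 (n k : ℕ) (hk : 1 ≤ k) (α : ℕ → ℝ) (L : Fin k → ℝ)
    (hL : ∀ i, L i ≠ 0) (S : ℕ → ℝ) (Lah : ℕ → ℕ → ℝ)
    (hS : ∀ x : ℝ, ∏ i ∈ range n, (x - α i) = ∑ m ∈ range (n + 1), S m * ffall x m)
    (hLah : ∀ m ≤ n, ∀ x : ℝ, ffall (-x) m = ∑ r ∈ range (m + 1), Lah m r * ffall x r) :
    iterInt (List.ofFn L) (fun t => ∏ i ∈ range n, (-t - α i)) =
      ∑ r ∈ range (n + 1), ∑ m ∈ Icc r n,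
        S m * Lah m r * iterInt (List.ofFn L) (fun t => ffall t r) :=
  stmt8_general n k α L S Lah hS hLah
end
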